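/- arXiv:math/0512489 — 4 statements merged into one kernel-verified Lean document; each statement's English description precedes it below -/
import Mathlib

section
/- Let U be a topological space, o a point in the closure of U, and f_1, …, f_N : U → ℂ continuous functions, not all simultaneously vanishing at any point, such that f_1, …, f_k extend continuously to U ∪ {o} and Σ_{i=1}^N |f_i(s)| → ∞ as s → o. Then any accumulation point of the projective points [f_1(s) : ⋯ : f_N(s)] ∈ ℙ^{N-1}(ℂ) as s → o has its first k homogeneous coordinates equal to zero. -/
open Filter Topology

noncomputable instance {N : ℕ} : TopologicalSpace (Projectivization ℂ (Fin N → ℂ)) :=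
  instTopologicalSpaceQuotient

/-- If `f₁,…,f_N : U → ℂ` are continuous, never simultaneously zero, the first
`k` of them extend continuously over a point `o ∈ closure U`, and `∑ |f_i| → ∞` at `o`, then
any accumulation point of `[f₁(s):⋯:f_N(s)] ∈ ℙ^{N-1}(ℂ)` as `s → o` has its first `k`
homogeneous coordinates zero. -/
theorem accumulation_point_first_coords_vanish
    {X : Type*} [TopologicalSpace X] {N k : ℕ} (hk : k ≤ N)
    (U : Set X) (o : X) (ho : o ∈ closure U)
    (f : Fin N → X → ℂ)
    (hcont : ∀ i, ContinuousOn (f i) U)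
    (hnz : ∀ s ∈ U, ∃ i, f i s ≠ 0)
    (hext : ∀ i : Fin N, (i : ℕ) < k → ∃ L : ℂ, Tendsto (f i) (𝓝[U] o) (𝓝 L))
    (hsum : Tendsto (fun s => ∑ i, ‖f i s‖) (𝓝[U] o) atTop)
    (v : Fin N → ℂ) (hv : v ≠ 0)
    (hacc : MapClusterPt (Projectivization.mk ℂ v hv)
      (Filter.comap (Subtype.val : U → X) (𝓝[U] o))
      (fun s : U => Projectivization.mk ℂ (fun i => f i s.1)
        (by obtain ⟨i, hi⟩ := hnz s.1 s.2; exact fun h => hi (congrFun h i)))) :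
    ∀ i : Fin N, (i : ℕ) < k → v i = 0 := by
  intro i hik
  by_contra hvi
  obtain ⟨L, hL⟩ := hext i hik
  set S : ℝ := ∑ j, ‖v j‖ with hS
  have hSpos : 0 < S := by
    have h1 : ‖v i‖ ≤ S := by
      apply Finset.single_le_sum (f := fun j => ‖v j‖) (fun j _ => by positivity)
        (Finset.mem_univ i)
    have : 0 < ‖v i‖ := by
      simpa using hvi
    linarith
  set c : ℝ := ‖v i‖ / (2 * S) with hc
  have hcpos : 0 < c := by
    have : 0 < ‖v i‖ := by simpa using hvi
    positivity
  -- the scale-invariant open set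
  set A : Set {w : Fin N → ℂ // w ≠ 0} :=
    {w | c * ∑ j, ‖w.1 j‖ < ‖w.1 i‖} with hA
  have hAopen : IsOpen A := by
    apply isOpen_lt
    · exact (continuous_const.mul (continuous_finset_sum _ fun j _ =>
        continuous_norm.comp ((continuous_apply j).comp continuous_subtype_val)))
    · exact continuous_norm.comp ((continuous_apply i).comp continuous_subtype_val)
  have hsat : ∀ a b : {w : Fin N → ℂ // w ≠ 0},
      (projectivizationSetoid ℂ (Fin N → ℂ)).r a b → (a ∈ A ↔ b ∈ A) := by
    rintro ⟨a, ha⟩ ⟨b, hb⟩ ⟨t, ht⟩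
    have ht' : (t : ℂ) • b = a := ht
    have habs : ∀ j, ‖a j‖ = ‖(t : ℂ)‖ * ‖b j‖ := by
      intro j
      rw [← ht']
      simp [Pi.smul_apply, map_mul]
    have htpos : 0 < ‖(t : ℂ)‖ := by
      simpa using t.ne_zero
    simp only [hA, Set.mem_setOf_eq, habs, ← Finset.mul_sum]
    constructor
    · intro h
      nlinarith [h, htpos]
    · intro h
      nlinarith [h, htpos]
  set V : Set (Projectivization ℂ (Fin N → ℂ)) := Quotient.mk'' '' A with hV
  have hpre : Quotient.mk'' ⁻¹' V = A := by
    ext w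
    constructor
    · rintro ⟨a, haA, hae⟩
      exact (hsat a w (Quotient.eq''.mp hae)).mp haA
    · intro hw
      exact ⟨w, hw, rfl⟩
  have hVopen : IsOpen V := by
    refine (isQuotientMap_quotient_mk' (s := projectivizationSetoid ℂ (Fin N → ℂ))).isOpen_preimage.mp ?_
    exact hpre ▸ hAopen
  have hmem : Projectivization.mk ℂ v hv ∈ V := by
    refine ⟨⟨v, hv⟩, ?_, rfl⟩
    show c * S < ‖v i‖
    have : c * S = ‖v i‖ / 2 := by
      field_simp [hc]
      rw [hc]; field_simp [hSpos.ne']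
    rw [this]
    have : 0 < ‖v i‖ := by simpa using hvi
    linarith
  have hfreq := mapClusterPt_iff_frequently.mp hacc V (hVopen.mem_nhds hmem)
  -- eventual bounds
  have habs : Tendsto (fun x => ‖f i x‖) (𝓝[U] o) (𝓝 (‖L‖)) :=
    (continuous_norm.tendsto L).comp hL
  have hev1 : ∀ᶠ x in 𝓝[U] o, ‖f i x‖ < ‖L‖ + 1 :=
    habs.eventually_lt_const (by linarith [norm_nonneg L])
  have hev2 : ∀ᶠ x in 𝓝[U] o, (‖L‖ + 1) / c < ∑ j, ‖f j x‖ :=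
    hsum.eventually_gt_atTop _
  have htc : Tendsto (Subtype.val : U → X) (Filter.comap Subtype.val (𝓝[U] o)) (𝓝[U] o) :=
    tendsto_comap
  have hev1' := htc.eventually hev1
  have hev2' := htc.eventually hev2
  obtain ⟨s, ⟨hsV, hs1⟩, hs2⟩ := ((hfreq.and_eventually hev1').and_eventually hev2').exists
  -- unpack membership
  have hne : (fun j => f j s.1) ≠ 0 := by
    obtain ⟨j, hj⟩ := hnz s.1 s.2
    exact fun h => hj (congrFun h j)
  have hsA : (⟨fun j => f j s.1, hne⟩ : {w : Fin N → ℂ // w ≠ 0}) ∈ A := by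
    rw [← hpre]
    exact hsV
  have hsA' : c * ∑ j, ‖f j s.1‖ < ‖f i s.1‖ := hsA
  have : ‖L‖ + 1 < c * ∑ j, ‖f j s.1‖ := by
    rw [div_lt_iff₀ hcpos] at hs2
    linarith [hs2]
  linarith
end

section
/- Let H be a complex vector space with a ℝ-bilinear extension setting: H carries a symmetric ℂ-bilinear form (·,·) and the associated hermitian pairing α·β̄ (conjugation with respect to a real structure preserving the form). Let e₀, e₁ ∈ H(ℝ) be real vectors spanning a totally isotropic real plane (so eᵢ·eⱼ = 0 for i,j ∈ {0,1}). For τ ∈ ℂ define ψ_τ(α) = α + τ((α·e₀)e₁ − (α·e₁)e₀). Then ψ_τ preserves the ℂ-bilinear form, and for every α ∈ H: ψ_τ(α)·conj(ψ_τ(α)) = α·ᾱ − 4 Im(τ)·Im((α·e₀)(ᾱ·e₁)). -/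
/-- for a real isotropic plane spanned by `e₀, e₁`, the transformation
`ψ_τ(α) = α + τ((α·e₀)e₁ − (α·e₁)e₀)` preserves the bilinear form, and
`ψ_τ(α)·conj(ψ_τ(α)) = α·ᾱ − 4 Im(τ)·Im((α·e₀)(ᾱ·e₁))`. -/
theorem isotropic_plane_translation_norm
    {H : Type*} [AddCommGroup H] [Module ℂ H]
    (B : H →ₗ[ℂ] H →ₗ[ℂ] ℂ) (hsymm : ∀ x y, B x y = B y x)
    (σ : H → H)
    (hadd : ∀ x y, σ (x + y) = σ x + σ y)
    (hsmul : ∀ (c : ℂ) (x : H), σ (c • x) = (starRingEnd ℂ c) • σ x)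
    (hinv : ∀ x, σ (σ x) = x)
    (hcompat : ∀ x y, B (σ x) (σ y) = starRingEnd ℂ (B x y))
    (e₀ e₁ : H) (h₀ : σ e₀ = e₀) (h₁ : σ e₁ = e₁)
    (h00 : B e₀ e₀ = 0) (h01 : B e₀ e₁ = 0) (h11 : B e₁ e₁ = 0)
    (τ : ℂ) (ψ : H → H)
    (hψ : ∀ α, ψ α = α + τ • (B α e₀ • e₁ - B α e₁ • e₀)) :
    (∀ α β, B (ψ α) (ψ β) = B α β) ∧
    ∀ α, B (ψ α) (σ (ψ α)) =
      B α (σ α) - ((4 * τ.im * ((B α e₀) * (B (σ α) e₁)).im : ℝ) : ℂ) := by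
  have h10 : B e₁ e₀ = 0 := by rw [hsymm]; exact h01
  constructor
  · intro α β
    simp only [hψ, map_add, map_smul, map_sub, LinearMap.add_apply, LinearMap.smul_apply,
      LinearMap.sub_apply, smul_eq_mul, h00, h01, h11, h10,
      hsymm e₁ β, hsymm e₀ β, hsymm e₁ α, hsymm e₀ α]
    ring
  · intro α
    have hs : ∀ x y : H, σ (x - y) = σ x - σ y := by
      intro x y
      have h := hadd (x - y) y
      rw [sub_add_cancel] at h
      rw [h]; abel
    have hσψ : σ (ψ α) = σ α + (starRingEnd ℂ τ) •
        ((B (σ α) e₀) • e₁ - (B (σ α) e₁) • e₀) := by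
      rw [hψ, hadd, hsmul, hs, hsmul, hsmul, ← hcompat α e₀, ← hcompat α e₁, h₀, h₁]
    rw [hσψ, hψ]
    simp only [map_add, map_smul, map_sub, LinearMap.add_apply, LinearMap.smul_apply,
      LinearMap.sub_apply, smul_eq_mul, h00, h01, h11, h10]
    have hb : B α e₁ = starRingEnd ℂ (B (σ α) e₁) := by
      have h := hcompat α e₁; rw [h₁] at h; rw [h, Complex.conj_conj]
    have ha : B (σ α) e₀ = starRingEnd ℂ (B α e₀) := by
      rw [← hcompat α e₀, h₀]
    rw [hsymm e₁ (σ α), hsymm e₀ (σ α), hb, ha]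
    simp only [Complex.ext_iff, Complex.add_re, Complex.add_im, Complex.sub_re, Complex.sub_im,
      Complex.mul_re, Complex.mul_im, Complex.conj_re, Complex.conj_im, Complex.ofReal_re,
      Complex.ofReal_im, Complex.zero_re, Complex.zero_im]
    constructor <;> ring
end

section
/- Let H be a complex vector space with real structure and symmetric ℂ-bilinear form defined over ℝ, e ∈ H(ℝ) isotropic (e·e = 0), and f ∈ e^⊥. With ψ_{e,f}(α) = α + (α·e)f − (α·f)e − ½(f·f)(α·e)e, one has for all α with α·e ≠ 0: ψ_{e,f}(α)·conj(ψ_{e,f}(α)) = α·ᾱ + 4|α·e|² ( Im((α·e)^{-1}α)·Im(f) + ½ Im(f)·Im(f) ), where Im(v) = (v − v̄)/(2i) ∈ H(ℝ) and the dot on the right denotes the real bilinear form. -/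
/-- the norm identity for the Eichler transvection
`ψ_{e,f}(α) = α + (α·e)f − (α·f)e − ½(f·f)(α·e)e`:
`ψ(α)·ψ(α)‾ = α·ᾱ + 4|α·e|²( Im((α·e)⁻¹α)·Im(f) + ½ Im(f)·Im(f) )`. -/
theorem eichler_transvection_norm_identity
    {H : Type*} [AddCommGroup H] [Module ℂ H]
    (B : H →ₗ[ℂ] H →ₗ[ℂ] ℂ) (hsymm : ∀ x y, B x y = B y x)
    (σ : H → H)
    (hadd : ∀ x y, σ (x + y) = σ x + σ y)
    (hsmul : ∀ (c : ℂ) (x : H), σ (c • x) = (starRingEnd ℂ c) • σ x)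
    (hinv : ∀ x, σ (σ x) = x)
    (hcompat : ∀ x y, B (σ x) (σ y) = starRingEnd ℂ (B x y))
    (e f : H) (he : σ e = e) (hee : B e e = 0) (hef : B e f = 0)
    (Im : H → H) (hIm : ∀ v, Im v = ((2 * Complex.I)⁻¹ : ℂ) • (v - σ v))
    (ψ : H → H)
    (hψ : ∀ α, ψ α = α + B α e • f - B α f • e - ((1 / 2 : ℂ) * (B f f * B α e)) • e) :
    ∀ α : H, B α e ≠ 0 →
      B (ψ α) (σ (ψ α)) = B α (σ α)
        + ((4 * ‖B α e‖ ^ 2 : ℝ) : ℂ) *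
          (B (Im ((B α e)⁻¹ • α)) (Im f) + (1 / 2 : ℂ) * B (Im f) (Im f)) := by
  intro α ha
  have hsub : ∀ x y, σ (x - y) = σ x - σ y := by
    intro x y
    have h1 : σ (-y) = - σ y := by
      have := hsmul (-1) y
      simpa using this
    rw [sub_eq_add_neg, hadd, h1, ← sub_eq_add_neg]
  set a := B α e with ha'
  set b := B α f with hb'
  set c := B f f with hc'
  set p := B α (σ f) with hp'
  set t := B f (σ f) with ht'
  have hfe : B f e = 0 := by rw [hsymm]; exact hef
  have hc1 : B (σ α) e = starRingEnd ℂ a := by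
    conv_lhs => rw [← he]
    rw [hcompat]
  have hc2 : B (σ α) f = starRingEnd ℂ p := by
    conv_lhs => rw [← hinv f]
    rw [hcompat]
  have hc3 : B (σ α) (σ f) = starRingEnd ℂ b := by rw [hcompat]
  have hc5 : B e (σ f) = 0 := by
    conv_lhs => rw [← he]
    rw [hcompat, hef, map_zero]
  have hc7 : B (σ f) (σ f) = starRingEnd ℂ c := by rw [hcompat]
  have hc8 : B (σ f) f = t := by rw [hsymm]
  have hc9 : B (σ f) e = 0 := by rw [hsymm]; exact hc5
  have hfa : B f (σ α) = starRingEnd ℂ p := by rw [hsymm]; exact hc2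
  have hea : B e (σ α) = starRingEnd ℂ a := by rw [hsymm]; exact hc1
  have habs : ((4 * ‖a‖ ^ 2 : ℝ) : ℂ) = 4 * (a * starRingEnd ℂ a) := by
    rw [Complex.mul_conj, Complex.sq_norm]
    push_cast
    ring
  have hca : starRingEnd ℂ a ≠ 0 := by
    simpa using ha
  have h4 : ((2 * Complex.I)⁻¹ : ℂ) * (2 * Complex.I)⁻¹ = -(1/4) := by
    have h : (2 * Complex.I) * (2 * Complex.I) = -4 := by
      have hI2 : Complex.I * Complex.I = -1 := Complex.I_mul_I
      linear_combination 4 * hI2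
    rw [← mul_inv, h]
    norm_num
  have hBI : ∀ x y : H, B ((2 * Complex.I)⁻¹ • x) ((2 * Complex.I)⁻¹ • y)
      = -(1/4) * B x y := by
    intro x y
    simp only [map_smul, LinearMap.smul_apply, smul_eq_mul, ← mul_assoc, h4]
  rw [hψ α, hIm, hIm, hBI, hBI]
  simp only [hsub, hadd, hsmul, he]
  simp only [map_inv₀, map_add, map_sub, map_smul, LinearMap.add_apply, LinearMap.sub_apply,
    LinearMap.smul_apply, smul_eq_mul, hc1, hc2, hc3, hc5, hc7, hc8, hc9, hfa, hea,
    hee, hef, hfe, habs]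
  simp only [← ha', ← hb', ← hc', ← hp', ← ht']
  have h2 : (starRingEnd ℂ) (2:ℂ) = 2 := map_ofNat _ 2
  field_simp [h2]
  simp only [map_mul, map_div₀, map_one, h2]
  ring
end

section
/- Let H be a finite-dimensional complex vector space with a real structure and a nondegenerate symmetric bilinear form of real signature (n, 2), n ≥ 1. Then the set Ω = {α ∈ H : α·α = 0 and α·ᾱ < 0} is nonempty, open in the quadric {α·α = 0} minus the origin, and has exactly two connected components, which are interchanged by complex conjugation α ↦ ᾱ. -/
open Module

section auxiliary

private lemma isPathConnected_prod' {X Y : Type*} [TopologicalSpace X] [TopologicalSpace Y]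
    {s : Set X} {t : Set Y} (hs : IsPathConnected s) (ht : IsPathConnected t) :
    IsPathConnected (s ×ˢ t) := by
  obtain ⟨x, hx, hsx⟩ := hs
  obtain ⟨y, hy, hty⟩ := ht
  refine ⟨(x, y), ⟨hx, hy⟩, ?_⟩
  rintro ⟨a, b⟩ ⟨ha, hb⟩
  obtain ⟨γ₁, hγ₁⟩ := hsx ha
  obtain ⟨γ₂, hγ₂⟩ := hty hb
  exact ⟨γ₁.prod γ₂, fun τ => ⟨hγ₁ τ, hγ₂ τ⟩⟩

end auxiliary

set_option maxHeartbeats 3200000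

/-- for a symmetric bilinear form of real signature `(n,2)` on a complex
vector space with real structure `σ`, the set `Ω = {α | α·α = 0, α·ᾱ < 0}` is nonempty,
open in the quadric minus the origin, and has exactly two connected components, which are
interchanged by `σ`. -/
theorem domain_two_components
    {H : Type*} [NormedAddCommGroup H] [NormedSpace ℂ H] [FiniteDimensional ℂ H]
    (B : H →ₗ[ℂ] H →ₗ[ℂ] ℂ) (hsymm : ∀ x y, B x y = B y x)
    (hnondeg : ∀ x, (∀ y, B x y = 0) → x = 0)
    (σ : H → H)
    (hadd : ∀ x y, σ (x + y) = σ x + σ y)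
    (hsmul : ∀ (c : ℂ) (x : H), σ (c • x) = (starRingEnd ℂ c) • σ x)
    (hinv : ∀ x, σ (σ x) = x)
    (hcompat : ∀ x y, B (σ x) (σ y) = starRingEnd ℂ (B x y))
    (n : ℕ) (hn : 1 ≤ n) (hdim : finrank ℂ H = n + 2)
    -- the real points carry a form of signature (n,2):
    (hsig : ∃ P N : Submodule ℝ H,
      (∀ x ∈ P, σ x = x) ∧ (∀ x ∈ N, σ x = x) ∧
      finrank ℝ P = n ∧ finrank ℝ N = 2 ∧
      (∀ x ∈ P, x ≠ 0 → 0 < (B x x).re) ∧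
      (∀ x ∈ N, x ≠ 0 → (B x x).re < 0) ∧
      (∀ x ∈ P, ∀ y ∈ N, B x y = 0) ∧ P ⊓ N = ⊥ ∧
      (∀ x : H, σ x = x → x ∈ P ⊔ N)) :
    (let Ω : Set H := {α | B α α = 0 ∧ (B α (σ α)).re < 0}
    Ω.Nonempty ∧
    IsOpen {s : {α : H // B α α = 0 ∧ α ≠ 0} | (s : H) ∈ Ω} ∧
    ∃ Ωp Ωm : Set H, Ωp.Nonempty ∧ Ωm.Nonempty ∧ Disjoint Ωp Ωm ∧ Ωp ∪ Ωm = Ω ∧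
      (∀ α ∈ Ωp, connectedComponentIn Ω α = Ωp) ∧
      (∀ α ∈ Ωm, connectedComponentIn Ω α = Ωm) ∧
      σ '' Ωp = Ωm) := by
  obtain ⟨P, N, hPfix, hNfix, hPrank, hNrank, hPpos, hNneg, hPN, hPNinf, hsup⟩ := hsig
  intro Ω
  have hΩmem : ∀ α : H, α ∈ Ω ↔ (B α α = 0 ∧ (B α (σ α)).re < 0) := fun α => Iff.rfl
  have hts : ∀ (t : ℝ) (z : H), (t : ℂ) • z = t • z := by
    intro t z
    rw [← algebraMap_smul ℂ t z]
    norm_num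
  have hsmulR : ∀ (r : ℝ) (x : H), σ (r • x) = r • σ x := by
    intro r x
    rw [← hts, hsmul, Complex.conj_ofReal, hts]
  let σL : H →ₗ[ℝ] H := ⟨⟨σ, hadd⟩, hsmulR⟩
  have hσcont : Continuous σ := σL.continuous_of_finiteDimensional
  have hneg : ∀ x : H, σ (-x) = -σ x := by
    intro x
    have := hsmul (-1) x
    simpa using this
  have hsub : ∀ x y : H, σ (x - y) = σ x - σ y := by
    intro x y
    rw [sub_eq_add_neg, hadd, hneg, sub_eq_add_neg]
  -- realness of B on fixed vectors
  have hre : ∀ x y : H, σ x = x → σ y = y → B x y = ((B x y).re : ℂ) := by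
    intro x y hx hy
    have h := hcompat x y
    rw [hx, hy] at h
    exact (Complex.conj_eq_iff_re.mp h.symm).symm
  obtain ⟨e, f, heN, hfN, hσe, hσf, hee, hff, hef, hfe⟩ :
      ∃ e f : H, e ∈ N ∧ f ∈ N ∧ σ e = e ∧ σ f = f ∧
      B e e = -1 ∧ B f f = -1 ∧ B e f = 0 ∧ B f e = 0 := by
    haveI hNfd : FiniteDimensional ℝ N := Module.finite_of_finrank_pos (by rw [hNrank]; norm_num)
    have hNbot : N ≠ ⊥ := by
      intro h
      rw [h, finrank_bot] at hNrank
      norm_num at hNrank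
    obtain ⟨e₀, he₀N, he₀⟩ := Submodule.exists_mem_ne_zero_of_ne_bot hNbot
    -- a vector in N orthogonal to e₀
    let φ : N →ₗ[ℝ] ℝ :=
      { toFun := fun w => (B e₀ (w : H)).re
        map_add' := by intro a b; simp
        map_smul' := by
          intro r a
          simp only [SetLike.val_smul, RingHom.id_apply, smul_eq_mul]
          rw [← hts, map_smul, smul_eq_mul]
          simp [Complex.mul_re] }
    have hker : ∃ f₁ : H, f₁ ∈ N ∧ f₁ ≠ 0 ∧ (B e₀ f₁).re = 0 := by
      have h1 := φ.finrank_range_add_finrank_ker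
      have h2 : finrank ℝ (LinearMap.range φ) ≤ 1 := by
        simpa using (LinearMap.range φ).finrank_le
      have h3 : LinearMap.ker φ ≠ ⊥ := by
        intro h
        rw [h, finrank_bot, hNrank] at h1
        omega
      obtain ⟨w, hw, hw0⟩ := Submodule.exists_mem_ne_zero_of_ne_bot h3
      refine ⟨(w : H), w.2, ?_, ?_⟩
      · simpa [ZeroMemClass.coe_eq_zero] using hw0
      · exact hw
    obtain ⟨f₁, hf₁N, hf₁0, hf₁e⟩ := hker
    have hBef : B e₀ f₁ = 0 := by
      rw [hre e₀ f₁ (hNfix _ he₀N) (hNfix _ hf₁N), hf₁e]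
      simp
    -- normalization helper
    have hnorm : ∀ w : H, w ∈ N → w ≠ 0 → ∃ c : ℝ, 0 < c ∧ B (c • w) (c • w) = -1 := by
      intro w hwN hw0
      have hwneg : (B w w).re < 0 := hNneg w hwN hw0
      have hpos : (0:ℝ) < -(B w w).re := by linarith
      refine ⟨(Real.sqrt (-(B w w).re))⁻¹, by positivity, ?_⟩
      rw [← hts]
      simp only [map_smul, LinearMap.smul_apply, smul_eq_mul]
      rw [hre w w (hNfix _ hwN) (hNfix _ hwN)]
      have hmm : ((Real.sqrt (-(B w w).re))⁻¹ : ℝ) * ((Real.sqrt (-(B w w).re))⁻¹ * (B w w).re)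
          = -1 := by
        rw [← mul_assoc, ← mul_inv, Real.mul_self_sqrt (by linarith)]
        field_simp
        rw [div_self (ne_of_lt hwneg)]
      simp only [Complex.ofReal_re]
      norm_cast
      rw [hmm]
      simp
    obtain ⟨c₁, hc₁, hee⟩ := hnorm e₀ he₀N he₀
    obtain ⟨c₂, hc₂, hff⟩ := hnorm f₁ hf₁N hf₁0
    refine ⟨c₁ • e₀, c₂ • f₁, N.smul_mem _ he₀N, N.smul_mem _ hf₁N, ?_, ?_, hee, hff, ?_, ?_⟩
    · rw [hsmulR, hNfix _ he₀N]
    · rw [hsmulR, hNfix _ hf₁N]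
    · rw [← hts, ← hts]
      simp only [map_smul, LinearMap.smul_apply, smul_eq_mul, hBef]
      ring
    · rw [hsymm, ← hts, ← hts]
      simp only [map_smul, LinearMap.smul_apply, smul_eq_mul, hBef]
      ring
  haveI hNfd : FiniteDimensional ℝ N := Module.finite_of_finrank_pos (by rw [hNrank]; norm_num)
  have hNzero : ∀ w, w ∈ N → B w e = 0 → B w f = 0 → w = 0 := by
    intro w hwN hwe hwf
    have hli : ¬ LinearIndependent ℝ ![(⟨e, heN⟩ : N), ⟨f, hfN⟩, ⟨w, hwN⟩] := by
      intro hli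
      have h3 := hli.fintype_card_le_finrank
      rw [hNrank] at h3
      simp at h3
    rw [Fintype.not_linearIndependent_iff] at hli
    obtain ⟨g, hg, i, hgi⟩ := hli
    have hgH : g 0 • e + g 1 • f + g 2 • w = 0 := by
      have := congrArg (Subtype.val) hg
      simpa [Fin.sum_univ_three] using this
    have happ : ∀ z : H, B (g 0 • e + g 1 • f + g 2 • w) z
        = (g 0 : ℂ) * B e z + (g 1 : ℂ) * B f z + (g 2 : ℂ) * B w z := by
      intro z
      rw [← hts, ← hts, ← hts]
      simp only [map_add, map_smul, LinearMap.add_apply, LinearMap.smul_apply, smul_eq_mul]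
    have h0 : g 0 = 0 := by
      have := happ e
      rw [hgH] at this
      simp only [map_zero, LinearMap.zero_apply, hee, hfe, hwe, mul_zero, mul_neg_one,
        add_zero] at this
      have : (g 0 : ℂ) = 0 := by linear_combination this
      exact_mod_cast this
    have h1 : g 1 = 0 := by
      have := happ f
      rw [hgH] at this
      simp only [map_zero, LinearMap.zero_apply, hef, hff, hwf, mul_zero, mul_neg_one,
        add_zero] at this
      have : (g 1 : ℂ) = 0 := by linear_combination this
      exact_mod_cast this
    have h2 : g 2 ≠ 0 := by
      fin_cases i
      · exact absurd h0 hgi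
      · exact absurd h1 hgi
      · exact hgi
    have : g 2 • w = 0 := by
      rw [h0, h1] at hgH
      simpa using hgH
    rcases smul_eq_zero.mp this with h | h
    · exact absurd h h2
    · exact h
  have bexp : ∀ (β β' : H) (s u v s' u' v' : ℂ), B β e = 0 → B β f = 0 → B β' e = 0 → B β' f = 0 →
      B (s•β + u•e + v•f) (s'•β' + u'•e + v'•f) = s*s'*(B β β') - u*u' - v*v' := by
    intro β β' s u v s' u' v' h1 h2 h3 h4
    have h5 : B e β' = 0 := by rw [hsymm]; exact h3
    have h6 : B f β' = 0 := by rw [hsymm]; exact h4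
    simp only [map_add, map_smul, LinearMap.add_apply, LinearMap.smul_apply, smul_eq_mul,
      h1, h2, h5, h6, hee, hff, hef, hfe]
    ring
  have main : ∀ α : H, ∃ β : H, B β e = 0 ∧ B β f = 0 ∧ B (σ β) e = 0 ∧ B (σ β) f = 0 ∧
      α = (1:ℂ)•β + (-(B α e))•e + (-(B α f))•f ∧
      σ α = (1:ℂ)•(σ β) + (starRingEnd ℂ (-(B α e)))•e + (starRingEnd ℂ (-(B α f)))•f ∧
      (0:ℝ) ≤ (B β (σ β)).re ∧ (B β (σ β)).im = 0 ∧
      ‖B β β‖ ≤ (B β (σ β)).re := by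
    intro α
    set β : H := α + (B α e)•e + (B α f)•f with hβ
    have hβe : B β e = 0 := by
      simp only [hβ, map_add, map_smul, LinearMap.add_apply, LinearMap.smul_apply, smul_eq_mul,
        hee, hfe]
      ring
    have hβf : B β f = 0 := by
      simp only [hβ, map_add, map_smul, LinearMap.add_apply, LinearMap.smul_apply, smul_eq_mul,
        hef, hff]
      ring
    have hσβe : B (σ β) e = 0 := by
      have h := hcompat β e
      rw [hσe] at h
      rw [h, hβe, map_zero]
    have hσβf : B (σ β) f = 0 := by
      have h := hcompat β f
      rw [hσf] at h
      rw [h, hβf, map_zero]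
    have hdec : α = (1:ℂ)•β + (-(B α e))•e + (-(B α f))•f := by
      rw [hβ]
      module
    have hσdec : σ α = (1:ℂ)•(σ β) + (starRingEnd ℂ (-(B α e)))•e + (starRingEnd ℂ (-(B α f)))•f := by
      conv_lhs => rw [hdec]
      rw [hadd, hadd, hsmul, hsmul, hsmul, hσe, hσf, map_one]
    -- the positive-part vectors
    set x : H := (2⁻¹:ℂ) • (β + σ β) with hx
    set y : H := (2⁻¹ * Complex.I) • (σ β - β) with hy
    have hσx : σ x = x := by
      rw [hx, hsmul, hadd, hinv]
      rw [show (starRingEnd ℂ) (2⁻¹:ℂ) = 2⁻¹ by norm_num [Complex.ext_iff]]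
      rw [add_comm (σ β) β]
    have hσy : σ y = y := by
      rw [hy, hsmul, hsub, hinv]
      rw [show (starRingEnd ℂ) (2⁻¹ * Complex.I) = -(2⁻¹ * Complex.I) by
        simp [Complex.ext_iff]]
      module
    have memP : ∀ z : H, σ z = z → B z e = 0 → B z f = 0 → z ∈ P := by
      intro z hz hze hzf
      obtain ⟨zp, hzp, zn, hzn, hzsum⟩ := Submodule.mem_sup.mp (hsup z hz)
      have hpe : B zp e = 0 := hPN zp hzp e heN
      have hpf : B zp f = 0 := hPN zp hzp f hfN
      have hne : B zn e = 0 := by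
        have : B (zp + zn) e = 0 := by rw [hzsum]; exact hze
        simp only [map_add, LinearMap.add_apply, hpe, zero_add] at this
        exact this
      have hnf : B zn f = 0 := by
        have : B (zp + zn) f = 0 := by rw [hzsum]; exact hzf
        simp only [map_add, LinearMap.add_apply, hpf, zero_add] at this
        exact this
      have : zn = 0 := hNzero zn hzn hne hnf
      rw [← hzsum, this, add_zero]
      exact hzp
    have hBxe : B x e = 0 := by
      rw [hx]; simp only [map_add, map_smul, LinearMap.add_apply, LinearMap.smul_apply,
        smul_eq_mul, hβe, hσβe]; ring
    have hBxf : B x f = 0 := by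
      rw [hx]; simp only [map_add, map_smul, LinearMap.add_apply, LinearMap.smul_apply,
        smul_eq_mul, hβf, hσβf]; ring
    have hBye : B y e = 0 := by
      rw [hy]; simp only [map_sub, map_smul, LinearMap.sub_apply, LinearMap.smul_apply,
        smul_eq_mul, hβe, hσβe]; ring
    have hByf : B y f = 0 := by
      rw [hy]; simp only [map_sub, map_smul, LinearMap.sub_apply, LinearMap.smul_apply,
        smul_eq_mul, hβf, hσβf]; ring
    have hxP : x ∈ P := memP x hσx hBxe hBxf
    have hyP : y ∈ P := memP y hσy hBye hByf
    have hβxy : β = x + Complex.I • y := by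
      rw [hx, hy, smul_smul, show Complex.I*(2⁻¹*Complex.I) = (-2⁻¹ : ℂ) by
        rw [mul_comm Complex.I, mul_assoc, Complex.I_mul_I]; ring]
      module
    have hσβxy : σ β = x - Complex.I • y := by
      conv_lhs => rw [hβxy]
      rw [hadd, hsmul Complex.I y, hσx, hσy, Complex.conj_I]
      module
    -- real components
    set a : ℝ := (B x x).re with ha
    set b : ℝ := (B y y).re with hb
    set c : ℝ := (B x y).re with hc
    have hBxx : B x x = (a:ℂ) := by rw [ha]; exact hre x x hσx hσx
    have hByy : B y y = (b:ℂ) := by rw [hb]; exact hre y y hσy hσy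
    have hBxy : B x y = (c:ℂ) := by rw [hc]; exact hre x y hσx hσy
    have hByx : B y x = (c:ℂ) := by rw [hsymm]; exact hBxy
    have hQ : ∀ z : H, z ∈ P → 0 ≤ (B z z).re := by
      intro z hz
      rcases eq_or_ne z 0 with h | h
      · rw [h]; simp
      · exact le_of_lt (hPpos z hz h)
    have ha0 : 0 ≤ a := hQ x hxP
    have hb0 : 0 ≤ b := hQ y hyP
    have hcs : c^2 ≤ a * b := by
      rcases eq_or_ne y 0 with h | h
      · have hb' : b = 0 := by rw [hb, h]; simp
        have hc' : c = 0 := by rw [hc, h]; simp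
        rw [hb', hc']; norm_num
      · have hbpos : 0 < b := hPpos y hyP h
        have hquad : ∀ t : ℝ, 0 ≤ a + 2*t*c + t^2*b := by
          intro t
          have hmem : x + t • y ∈ P := P.add_mem hxP (P.smul_mem t hyP)
          have h0 : 0 ≤ (B (x + t•y) (x + t•y)).re := hQ _ hmem
          rw [← hts t y] at h0
          have hexp : B (x + (t:ℂ)•y) (x + (t:ℂ)•y) = ((a + 2*t*c + t^2*b : ℝ) : ℂ) := by
            simp only [map_add, map_smul, LinearMap.add_apply, LinearMap.smul_apply, smul_eq_mul,
              hBxx, hByy, hBxy, hByx]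
            push_cast
            ring
          rw [hexp, Complex.ofReal_re] at h0
          exact h0
        have := hquad (-(c/b))
        have h2 : 0 ≤ a - c^2/b := by
          have : a + 2*(-(c/b))*c + (-(c/b))^2*b = a - c^2/b := by field_simp; ring
          linarith [hquad (-(c/b)), this ▸ hquad (-(c/b))]
        calc c^2 = (c^2/b) * b := by field_simp
        _ ≤ a * b := by
          apply mul_le_mul_of_nonneg_right _ (le_of_lt hbpos)
          linarith
    -- values of B β β and B β (σ β)
    have hBββ : B β β = ((a - b:ℝ):ℂ) + 2*(c:ℂ)*Complex.I := by
      rw [hβxy]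
      simp only [map_add, map_smul, LinearMap.add_apply, LinearMap.smul_apply, smul_eq_mul,
        hBxx, hByy, hBxy, hByx]
      push_cast
      linear_combination (b:ℂ) * Complex.I_sq
    have hBβσβ : B β (σ β) = ((a + b:ℝ):ℂ) := by
      rw [hσβxy]
      conv_lhs => rw [hβxy]
      simp only [map_add, map_sub, map_smul, LinearMap.add_apply, LinearMap.sub_apply,
        LinearMap.smul_apply, smul_eq_mul, hBxx, hByy, hBxy, hByx]
      push_cast
      linear_combination (-(b:ℂ)) * Complex.I_sq
    have hre' : (B β (σ β)).re = a + b := by rw [hBβσβ]; simp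
    have him' : (B β (σ β)).im = 0 := by rw [hBβσβ]; simp
    have habs : ‖B β β‖ ≤ (B β (σ β)).re := by
      rw [hre']
      have h1 : (‖B β β‖)^2 = (a-b)^2 + (2*c)^2 := by
        rw [Complex.sq_norm, Complex.normSq_apply, hBββ]
        simp
        ring
      nlinarith [norm_nonneg (B β β), hcs, ha0, hb0]
    exact ⟨β, hβe, hβf, hσβe, hσβf, hdec, hσdec, by rw [hre']; linarith, him', habs⟩
  -- ω and the key identities
  set ω : H := e + Complex.I • f with hω
  have hB0e : B (0:H) e = 0 := by simp
  have hB0f : B (0:H) f = 0 := by simp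
  have hωc : ω = (0:ℂ)•(0:H) + (1:ℂ)•e + Complex.I•f := by rw [hω]; module
  have hσω : σ ω = (0:ℂ)•(0:H) + (1:ℂ)•e + (-Complex.I)•f := by
    rw [hω, hadd, hsmul Complex.I f, hσe, hσf, Complex.conj_I]
    module
  have hvals : ∀ α : H, ∀ β : H, B β e = 0 → B β f = 0 →
      α = (1:ℂ)•β + (-(B α e))•e + (-(B α f))•f →
      B α ω = B α e + Complex.I * B α f ∧ B α (σ ω) = B α e - Complex.I * B α f := by
    intro α β hβe hβf hdec
    constructor
    · conv_lhs => rw [hdec, hωc]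
      rw [bexp β 0 1 (-(B α e)) (-(B α f)) 0 1 Complex.I hβe hβf hB0e hB0f]
      ring
    · conv_lhs => rw [hdec, hσω]
      rw [bexp β 0 1 (-(B α e)) (-(B α f)) 0 1 (-Complex.I) hβe hβf hB0e hB0f]
      ring
  have keyβ : ∀ α : H, ∃ β : H, B β e = 0 ∧ B β f = 0 ∧ B (σ β) e = 0 ∧ B (σ β) f = 0 ∧
      α = (1:ℂ)•β + (-(B α e))•e + (-(B α f))•f ∧
      (0:ℝ) ≤ (B β (σ β)).re ∧ (B β (σ β)).im = 0 ∧
      ‖B β β‖ ≤ (B β (σ β)).re ∧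
      B α ω = B α e + Complex.I * B α f ∧
      B α (σ ω) = B α e - Complex.I * B α f ∧
      B α α + B α ω * B α (σ ω) = B β β ∧
      (B α (σ α)).re = (B β (σ β)).re
        - (Complex.normSq (B α ω) + Complex.normSq (B α (σ ω)))/2 := by
    intro α
    obtain ⟨β, hβe, hβf, hσβe, hσβf, hdec, hσdec, hR0, him, habs⟩ := main α
    obtain ⟨hαω, hασω⟩ := hvals α β hβe hβf hdec
    set A : ℂ := B α e with hA
    set C : ℂ := B α f with hC
    have hid : B α α + (B α ω) * (B α (σ ω)) = B β β := by
      rw [hαω, hασω]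
      conv_lhs => rw [hdec]
      rw [bexp β β 1 (-A) (-C) 1 (-A) (-C) hβe hβf hβe hβf]
      linear_combination (-(C)^2) * Complex.I_sq
    have hre2 : (B α (σ α)).re = (B β (σ β)).re
        - (Complex.normSq (B α ω) + Complex.normSq (B α (σ ω)))/2 := by
      have hRc : B β (σ β) = (((B β (σ β)).re : ℝ) : ℂ) := by
        apply Complex.ext <;> simp [him]
      have hασα : B α (σ α) = B β (σ β)
          - A*(starRingEnd ℂ A) - C*(starRingEnd ℂ C) := by
        conv_lhs => rw [hσdec, hdec]
        rw [bexp β (σ β) 1 (-A) (-C) 1 (starRingEnd ℂ (-A))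
          (starRingEnd ℂ (-C)) hβe hβf hσβe hσβf]
        simp only [map_neg]
        ring
      have hns : Complex.normSq (B α ω) + Complex.normSq (B α (σ ω))
          = 2 * (Complex.normSq A + Complex.normSq C) := by
        rw [hαω, hασω]
        simp only [Complex.normSq_apply, Complex.add_re, Complex.add_im, Complex.sub_re,
          Complex.sub_im, Complex.mul_re, Complex.mul_im, Complex.I_re, Complex.I_im]
        ring
      rw [hασα, hRc]
      rw [Complex.mul_conj, Complex.mul_conj]
      rw [hns]
      simp
      ring
    exact ⟨β, hβe, hβf, hσβe, hσβf, hdec, hR0, him, habs, hαω, hασω, hid, hre2⟩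
  have hcover : ∀ α : H, B α α = 0 → (B α (σ α)).re < 0 →
      ‖B α (σ ω)‖ ≠ ‖B α ω‖ := by
    intro α h0 hneg heq
    obtain ⟨β, -, -, -, -, -, hR0, -, habs, -, -, hid, hre2⟩ := keyβ α
    rw [h0, zero_add] at hid
    have h1 : ‖B α ω‖ * ‖B α (σ ω)‖ ≤ (B β (σ β)).re := by
      rw [← norm_mul, hid]; exact habs
    have h2 : Complex.normSq (B α ω) = (‖B α ω‖)^2 := by
      rw [Complex.normSq_eq_norm_sq]
    have h3 : Complex.normSq (B α (σ ω)) = (‖B α (σ ω)‖)^2 := by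
      rw [Complex.normSq_eq_norm_sq]
    rw [h2, h3, heq] at hre2
    rw [heq] at h1
    nlinarith [hre2, h1, hneg]
  set S : Set H := {α : H | (B α α = 0 ∧ (B α (σ α)).re < 0) ∧
      B α ω = -1 ∧ ‖B α (σ ω)‖ < 1} with hS
  have hSpc : IsPathConnected S := by
    have hωc : ω = (0:ℂ)•(0:H) + (1:ℂ)•e + Complex.I•f := by rw [hω]; module
    have hσcomb : ∀ (β : H) (s u v : ℂ), σ (s•β + u•e + v•f) =
        (starRingEnd ℂ s)•(σ β) + (starRingEnd ℂ u)•e + (starRingEnd ℂ v)•f := by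
      intro β s u v
      rw [hadd, hadd, hsmul, hsmul, hsmul, hσe, hσf]
    have realineq : ∀ t R K : ℝ, 0 ≤ t → t ≤ 1 → 0 ≤ K → K < 1 → R < (1+K)/2 →
        t^2*R < (1 + t^4*K)/2 := by
      intro t R K ht0 ht1 hK0 hK1 hRK
      rcases eq_or_ne t 0 with rfl | ht
      · norm_num
      · have ht2 : 0 < t^2 := by positivity
        have h1 : t^2*R < t^2*((1+K)/2) := mul_lt_mul_of_pos_left hRK ht2
        have ht21 : t^2 ≤ 1 := by nlinarith
        have h2 : (1 - t^2)*(1 - t^2*K) ≥ 0 := by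
          apply mul_nonneg (by linarith)
          nlinarith
        nlinarith
    -- the generic path-membership computation
    have hmemS : ∀ (β : H) (q₀ : ℂ), B β e = 0 → B β f = 0 → B (σ β) e = 0 → B (σ β) f = 0 →
        B β β = q₀ → (B β (σ β)).im = 0 → ‖q₀‖ < 1 →
        (B β (σ β)).re < (1 + Complex.normSq q₀)/2 →
        ∀ t : ℝ, 0 ≤ t → t ≤ 1 →
        ((t:ℂ)•β + ((1 + (t:ℂ)^2*q₀)/2)•e + (-Complex.I*(1-(t:ℂ)^2*q₀)/2)•f) ∈ S := by
      intro β q₀ hβe hβf hσβe hσβf hq him habs hRK t ht0 ht1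
      set u : ℂ := (1 + (t:ℂ)^2*q₀)/2 with hu
      set v : ℂ := -Complex.I*(1-(t:ℂ)^2*q₀)/2 with hv
      set γ : H := (t:ℂ)•β + u•e + v•f with hγ
      have hγγ : B γ γ = 0 := by
        rw [hγ, bexp β β (t:ℂ) u v (t:ℂ) u v hβe hβf hβe hβf, hq, hu, hv]
        linear_combination (-(1 - (t:ℂ)^2*q₀)^2/4) * Complex.I_sq
      have hσγ : σ γ = (starRingEnd ℂ (t:ℂ))•(σ β) + (starRingEnd ℂ u)•e + (starRingEnd ℂ v)•f :=
        hσcomb β (t:ℂ) u v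
      have hγσγ : B γ (σ γ) = (t:ℂ)*(starRingEnd ℂ (t:ℂ))*(B β (σ β))
          - u*(starRingEnd ℂ u) - v*(starRingEnd ℂ v) := by
        rw [hγ, hσγ, bexp β (σ β) _ _ _ _ _ _ hβe hβf hσβe hσβf]
      have hγσγre : (B γ (σ γ)).re = t^2*(B β (σ β)).re
          - (1 + t^4 * Complex.normSq q₀)/2 := by
        rw [hγσγ, Complex.conj_ofReal, Complex.mul_conj, Complex.mul_conj]
        have h1 : Complex.normSq u + Complex.normSq v = (1 + t^4 * Complex.normSq q₀)/2 := by
          rw [hu, hv]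
          simp only [Complex.normSq_apply, Complex.div_re, Complex.div_im, Complex.add_re,
            Complex.add_im, Complex.sub_re, Complex.sub_im, Complex.mul_re, Complex.mul_im,
            Complex.one_re, Complex.one_im, Complex.I_re, Complex.I_im, Complex.neg_re,
            Complex.neg_im, Complex.ofReal_re, Complex.ofReal_im, Complex.re_ofNat, Complex.im_ofNat,
            pow_two]
          ring
        have h2 : ((t:ℂ) * (t:ℂ) * B β (σ β)).re = t^2 * (B β (σ β)).re := by
          have : (t:ℂ) * (t:ℂ) = ((t^2 : ℝ) : ℂ) := by push_cast; ring
          rw [this, Complex.re_ofReal_mul]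
        simp only [Complex.sub_re, Complex.ofReal_re, h2]
        rw [← h1]
        ring
      have hγω : B γ ω = -1 := by
        rw [hγ, hωc, bexp β 0 (t:ℂ) u v 0 1 Complex.I hβe hβf (by simp) (by simp), hu, hv]
        linear_combination ((1 - (t:ℂ)^2*q₀)/2) * Complex.I_sq
      have hγσω : B γ (σ ω) = -((t:ℂ)^2*q₀) := by
        rw [hγ, hσω, bexp β 0 (t:ℂ) u v 0 1 (-Complex.I) hβe hβf (by simp) (by simp), hu, hv]
        linear_combination (-(1 - (t:ℂ)^2*q₀)/2) * Complex.I_sq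
      have habsγ : ‖B γ (σ ω)‖ < 1 := by
        rw [hγσω]
        rw [norm_neg, norm_mul, norm_pow, Complex.norm_real, Real.norm_eq_abs]
        have h1 : |t| = t := abs_of_nonneg ht0
        rw [h1]
        nlinarith [norm_nonneg q₀,
          mul_nonneg (norm_nonneg q₀) (by nlinarith : (0:ℝ) ≤ 1 - t^2)]
      refine ⟨⟨hγγ, ?_⟩, hγω, habsγ⟩
      rw [hγσγre]
      have := realineq t (B β (σ β)).re (Complex.normSq q₀) ht0 ht1 (Complex.normSq_nonneg q₀)
        (by rw [Complex.normSq_eq_norm_sq]; nlinarith [norm_nonneg q₀]) hRK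
      linarith
    -- base point
    set base : H := (0:ℂ)•(0:H) + ((1:ℂ)/2)•e + (-Complex.I*(1:ℂ)/2)•f with hbase
    have hbaseS : base ∈ S := by
      have hσ0 : σ (0:H) = (0:H) := by simpa using hsmul 0 0
      have h := hmemS 0 0 (by simp) (by simp) (by simp [hσ0]) (by simp [hσ0])
        (by simp) (by simp [hσ0]) (by norm_num) (by simp [hσ0]) 0 le_rfl zero_le_one
      have hb : base = ((0:ℝ):ℂ)•(0:H) + ((1 + ((0:ℝ):ℂ)^2*(0:ℂ))/2)•e
          + (-Complex.I*(1-((0:ℝ):ℂ)^2*(0:ℂ))/2)•f := by rw [hbase]; norm_num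
      rw [hb]
      exact h
    refine ⟨base, hbaseS, ?_⟩
    intro α hα
    obtain ⟨⟨hΩ1, hΩ2⟩, hω1, hω2⟩ := hα
    obtain ⟨β, hβe, hβf, hσβe, hσβf, hdec, hR0, him, habs, hαω, hασω, hid, hre2⟩ := keyβ α
    set q₀ : ℂ := -(B α (σ ω)) with hq₀
    have hq : B β β = q₀ := by
      rw [hq₀, ← hid, hΩ1, hω1]
      ring
    have habsq : ‖q₀‖ < 1 := by
      rw [hq₀, norm_neg]
      exact hω2
    have hRK : (B β (σ β)).re < (1 + Complex.normSq q₀)/2 := by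
      have h1 : Complex.normSq (B α ω) = 1 := by rw [hω1]; simp
      have h2 : Complex.normSq (B α (σ ω)) = Complex.normSq q₀ := by
        rw [hq₀, Complex.normSq_neg]
      rw [h1, h2] at hre2
      linarith
    set A : ℂ := B α e with hA
    set C : ℂ := B α f with hC
    have h1 : A + Complex.I*C = -1 := by rw [← hαω]; exact hω1
    have h2 : A - Complex.I*C = -q₀ := by rw [hq₀, neg_neg]; exact hασω.symm
    set Γ : ℝ → H := fun t =>
      ((t:ℂ)•β + ((1 + (t:ℂ)^2*q₀)/2)•e + (-Complex.I*(1-(t:ℂ)^2*q₀)/2)•f) with hΓ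
    have hcont : Continuous Γ := by
      rw [hΓ]
      apply Continuous.add
      apply Continuous.add
      · exact Complex.continuous_ofReal.smul continuous_const
      · exact ((continuous_const.add ((Complex.continuous_ofReal.pow 2).mul
          continuous_const)).div_const 2).smul continuous_const
      · exact ((continuous_const.mul (continuous_const.sub
          ((Complex.continuous_ofReal.pow 2).mul continuous_const))).div_const 2).smul
          continuous_const
    have hΓ0 : Γ 0 = base := by
      rw [hΓ, hbase]
      norm_num
    have hΓ1 : Γ 1 = α := by
      have hu1 : (1 + ((1:ℝ):ℂ)^2*q₀)/2 = -A := by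
        push_cast
        linear_combination (h1 + h2)/2
      have hv1 : -Complex.I*(1 - ((1:ℝ):ℂ)^2*q₀)/2 = -C := by
        push_cast
        linear_combination (-Complex.I/2)*h1 + (Complex.I/2)*h2 + C*Complex.I_sq
      rw [hΓ]
      simp only
      rw [hu1, hv1]
      conv_rhs => rw [hdec]
      norm_num
    refine ⟨⟨⟨fun τ => Γ τ, hcont.comp continuous_subtype_val⟩, ?_, ?_⟩, ?_⟩
    · simpa using hΓ0
    · simpa using hΓ1
    · intro τ
      exact hmemS β q₀ hβe hβf hσβe hσβf hq him habsq hRK τ τ.2.1 τ.2.2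
  -- continuity facts
  have hBc : Continuous fun p : H × H => B p.1 p.2 := by
    let L : H →ₗ[ℂ] H →L[ℂ] ℂ :=
      { toFun := fun x => LinearMap.toContinuousLinearMap (B x)
        map_add' := by intro a b; ext z; simp
        map_smul' := by intro c a; ext z; simp }
    exact (LinearMap.toContinuousLinearMap L).continuous₂
  have habsωcont : Continuous fun α : H => ‖B α ω‖ :=
    continuous_norm.comp (hBc.comp (continuous_id.prodMk continuous_const))
  have habsσωcont : Continuous fun α : H => ‖B α (σ ω)‖ :=
    continuous_norm.comp (hBc.comp (continuous_id.prodMk continuous_const))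
  set U : Set H := {α : H | ‖B α (σ ω)‖ < ‖B α ω‖} with hUdef
  set V : Set H := {α : H | ‖B α ω‖ < ‖B α (σ ω)‖} with hVdef
  have hUopen : IsOpen U := isOpen_lt habsσωcont habsωcont
  have hVopen : IsOpen V := isOpen_lt habsωcont habsσωcont
  have hUVdisj : Disjoint U V := by
    rw [Set.disjoint_left]
    intro a ha hb
    have ha' : ‖B a (σ ω)‖ < ‖B a ω‖ := ha
    have hb' : ‖B a ω‖ < ‖B a (σ ω)‖ := hb
    exact lt_asymm ha' hb'
  have hΩcov : Ω ⊆ U ∪ V := by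
    intro α hα
    rcases lt_or_gt_of_ne (hcover α hα.1 hα.2) with h | h
    · exact Or.inl h
    · exact Or.inr h
  set Ωp : Set H := Ω ∩ U with hΩpdef
  set Ωm : Set H := Ω ∩ V with hΩmdef
  -- behaviour under scaling
  have hscale : ∀ (c : ℂ) (α : H), c ≠ 0 → α ∈ Ω →
      (c • α ∈ Ω ∧ ‖B (c•α) ω‖ = ‖c‖ * ‖B α ω‖ ∧
        ‖B (c•α) (σ ω)‖ = ‖c‖ * ‖B α (σ ω)‖) := by
    intro c α hc hα
    obtain ⟨hα1, hα2⟩ := hα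
    have h1 : B (c•α) (c•α) = 0 := by
      simp only [map_smul, LinearMap.smul_apply, smul_eq_mul]
      rw [hα1]
      ring
    have h2 : B (c•α) (σ (c•α)) = ((Complex.normSq c : ℝ):ℂ) * B α (σ α) := by
      rw [hsmul c α]
      simp only [map_smul, LinearMap.smul_apply, smul_eq_mul]
      rw [← Complex.mul_conj]
      ring
    have h2re : (B (c•α) (σ (c•α))).re = Complex.normSq c * (B α (σ α)).re := by
      rw [h2, Complex.re_ofReal_mul]
    refine ⟨⟨h1, ?_⟩, ?_, ?_⟩
    · rw [h2re]
      exact mul_neg_of_pos_of_neg (Complex.normSq_pos.mpr hc) hα2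
    · simp only [map_smul, LinearMap.smul_apply, smul_eq_mul, norm_mul]
    · simp only [map_smul, LinearMap.smul_apply, smul_eq_mul, norm_mul]
  have hSsub : S ⊆ Ωp := by
    intro α hα
    obtain ⟨hα1, hα2, hα3⟩ := hα
    refine ⟨hα1, ?_⟩
    show ‖B α (σ ω)‖ < ‖B α ω‖
    rw [hα2]
    simpa using hα3
  have hΩpimg : Ωp = (fun p : ℂ × H => p.1 • p.2) '' (({(0:ℂ)}ᶜ : Set ℂ) ×ˢ S) := by
    apply Set.Subset.antisymm
    · rintro α ⟨hαΩ, hαU⟩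
      have hαU' : ‖B α (σ ω)‖ < ‖B α ω‖ := hαU
      have hp0 : B α ω ≠ 0 := by
        intro h
        rw [h] at hαU'
        simp at hαU'
        exact absurd hαU' (not_lt.mpr (norm_nonneg _))
      set p : ℂ := -(B α ω) with hp
      have hp0' : p ≠ 0 := by simpa [hp] using hp0
      obtain ⟨hxΩ, hxω, hxσω⟩ := hscale p⁻¹ α (inv_ne_zero hp0') hαΩ
      refine ⟨(p, p⁻¹ • α), ⟨by simpa using hp0', ?_⟩, by simp [smul_smul,
        mul_inv_cancel₀ hp0', one_smul]⟩
      have hBxω : B (p⁻¹ • α) ω = -1 := by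
        simp only [map_smul, LinearMap.smul_apply, smul_eq_mul]
        rw [show B α ω = -p by rw [hp]; ring]
        field_simp
      refine ⟨⟨hxΩ.1, hxΩ.2⟩, hBxω, ?_⟩
      rw [hxσω]
      have habsp : ‖p‖ = ‖B α ω‖ := by rw [hp, norm_neg]
      rw [norm_inv, habsp]
      rw [inv_mul_lt_one₀ (norm_pos_iff.mpr hp0)]
      exact hαU'
    · rintro α ⟨⟨c, x⟩, ⟨hc, hx⟩, rfl⟩
      have hc' : c ≠ 0 := by simpa using hc
      obtain ⟨hx1, hx2, hx3⟩ := hx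
      obtain ⟨hcΩ, hcω, hcσω⟩ := hscale c x hc' hx1
      refine ⟨hcΩ, ?_⟩
      show ‖B (c • x) (σ ω)‖ < ‖B (c • x) ω‖
      rw [hcω, hcσω, hx2]
      simp only [norm_neg, norm_one]
      have : ‖c‖ > 0 := norm_pos_iff.mpr hc'
      calc ‖c‖ * ‖B x (σ ω)‖ < ‖c‖ * 1 := by
            exact mul_lt_mul_of_pos_left hx3 this
      _ = ‖c‖ * 1 := rfl
  have hΩppc : IsPathConnected Ωp := by
    rw [hΩpimg]
    exact (isPathConnected_prod' (isPathConnected_compl_singleton_of_one_lt_rank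
      (by rw [Complex.rank_real_complex]; norm_num) 0) hSpc).image continuous_smul
  -- σ exchanges the two pieces
  have hσswap : ∀ α : H, α ∈ Ω → (σ α ∈ Ω ∧
      ‖B (σ α) ω‖ = ‖B α (σ ω)‖ ∧
      ‖B (σ α) (σ ω)‖ = ‖B α ω‖) := by
    intro α hα
    have h1 : B (σ α) (σ α) = 0 := by rw [hcompat, hα.1, map_zero]
    have h2 : (B (σ α) (σ (σ α))).re = (B α (σ α)).re := by
      rw [hcompat]
      exact Complex.conj_re _
    have h3 : B (σ α) (σ (σ ω)) = starRingEnd ℂ (B α (σ ω)) := hcompat α (σ ω)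
    rw [hinv] at h3
    have h4 : B (σ α) (σ ω) = starRingEnd ℂ (B α ω) := hcompat α ω
    refine ⟨⟨h1, by rw [h2]; exact hα.2⟩, ?_, ?_⟩
    · rw [h3, Complex.norm_conj]
    · rw [h4, Complex.norm_conj]
  have hσΩm : σ '' Ωp = Ωm := by
    apply Set.Subset.antisymm
    · rintro _ ⟨α, ⟨hαΩ, hαU⟩, rfl⟩
      obtain ⟨hσΩ', he1, he2⟩ := hσswap α hαΩ
      refine ⟨hσΩ', ?_⟩
      show ‖B (σ α) ω‖ < ‖B (σ α) (σ ω)‖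
      rw [he1, he2]
      exact hαU
    · rintro α ⟨hαΩ, hαV⟩
      obtain ⟨hσΩ', he1, he2⟩ := hσswap α hαΩ
      refine ⟨σ α, ⟨hσΩ', ?_⟩, hinv α⟩
      show ‖B (σ α) (σ ω)‖ < ‖B (σ α) ω‖
      rw [he1, he2]
      exact hαV
  have hΩmpc : IsPathConnected Ωm := by
    rw [← hσΩm]
    exact hΩppc.image hσcont
  -- components
  have comp : ∀ (T U' V' : Set H), IsOpen U' → IsOpen V' → Disjoint U' V' →
      IsPathConnected T → T = Ω ∩ U' → Ω ⊆ U' ∪ V' →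
      ∀ α ∈ T, connectedComponentIn Ω α = T := by
    intro T U' V' hU' hV' hd hTpc hTeq hcov α hα
    have hαΩ : α ∈ Ω := (hTeq ▸ hα).1
    apply Set.Subset.antisymm
    · have hsub := connectedComponentIn_subset Ω α
      have hpc : IsPreconnected (connectedComponentIn Ω α) := isPreconnected_connectedComponentIn
      rcases hpc.subset_or_subset hU' hV' hd (fun z hz => hcov (hsub hz)) with h | h
      · rw [hTeq]
        exact Set.subset_inter hsub h
      · exfalso
        have hh1 : α ∈ V' := h (mem_connectedComponentIn hαΩ)
        have hh2 : α ∈ U' := (hTeq ▸ hα).2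
        exact Set.disjoint_left.mp hd hh2 hh1
    · exact hTpc.isConnected.isPreconnected.subset_connectedComponentIn hα
        (hTeq ▸ Set.inter_subset_left)
  obtain ⟨x₀, hx₀, -⟩ := hSpc
  refine ⟨⟨x₀, (hSsub hx₀).1⟩, ?_, Ωp, Ωm, ⟨x₀, hSsub hx₀⟩,
    ⟨σ x₀, by rw [← hσΩm]; exact Set.mem_image_of_mem σ (hSsub hx₀)⟩,
    hUVdisj.mono Set.inter_subset_right Set.inter_subset_right, ?_, ?_, ?_, hσΩm⟩
  · have heq : {s : {α : H // B α α = 0 ∧ α ≠ 0} | (s : H) ∈ Ω}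
        = Subtype.val ⁻¹' {α : H | (B α (σ α)).re < 0} := by
      ext s
      constructor
      · rintro ⟨-, h⟩
        exact h
      · intro h
        exact ⟨s.2.1, h⟩
    rw [heq]
    apply IsOpen.preimage continuous_subtype_val
    have hco : Continuous fun α : H => (B α (σ α)).re :=
      Complex.continuous_re.comp (hBc.comp (continuous_id.prodMk hσcont))
    exact isOpen_lt hco continuous_const
  · apply Set.Subset.antisymm
    · exact Set.union_subset Set.inter_subset_left Set.inter_subset_left
    · intro α hα
      rcases hΩcov hα with h | h
      · exact Or.inl ⟨hα, h⟩
      · exact Or.inr ⟨hα, h⟩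
  · intro α hα
    exact comp Ωp U V hUopen hVopen hUVdisj hΩppc rfl hΩcov α hα
  · intro α hα
    refine comp Ωm V U hVopen hUopen hUVdisj.symm hΩmpc rfl ?_ α hα
    intro z hz
    rcases hΩcov hz with h | h
    · exact Or.inr h
    · exact Or.inl h
end
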